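/- Let n ≥ 2 and D = (D_1,…,D_n) with D_i : ℤ_{≥1} → (0,∞) (convention D_i(0) = 1), and let D̃ = 𝒲D, so D̃_i : ℤ_{≥i} → (0,∞) (convention D̃_i(i−1) = 1). Then the matrix identity H_1(D_n)·H_1(D_{n−1})⋯H_1(D_1) = H_n(D̃_n)·H_{n−1}(D̃_{n−1})⋯H_1(D̃_1) holds entrywise, where all matrix products are well defined since each entry is a finite sum. -/

import Mathlib

open scoped BigOperators

/-- Value of `f : ℤ_{≥ r} → ℝ`, with the convention that values below the domain base
`r` equal `1`. -/
noncomputable def clo (r : ℤ) (f : ℤ → ℝ) (y : ℤ) : ℝ := if y < r then 1 else f y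

/-- The sum `Σ_{m=r}^{x} g(m)/f(m−1)` with the convention `f(r−1) = 1`. -/
noncomputable def pitSum (r : ℤ) (f g : ℤ → ℝ) (x : ℤ) : ℝ :=
  ∑ m ∈ Finset.Icc r x, g m / clo r f (m - 1)

/-- `(g ⊙ f)(x) = f(x) · Σ_{m=r}^{x} g(m)/f(m−1)`, for `f, g : ℤ_{≥r} → (0,∞)`. -/
noncomputable def odot (r : ℤ) (g f : ℤ → ℝ) : ℤ → ℝ := fun x => f x * pitSum r f g x

/-- `(f ⊗ g)(x) = g(x) · (Σ_{m=r}^{x} g(m)/f(m−1))⁻¹`, for `f, g : ℤ_{≥r} → (0,∞)`. -/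
noncomputable def otimes (r : ℤ) (f g : ℤ → ℝ) : ℤ → ℝ := fun x => g x * (pitSum r f g x)⁻¹

/-- The operator `𝒯_{r,m}`: replaces `(D_m, D_{m+1})` by `(D_{m+1}⊙D_m, D_m⊗D_{m+1})`
and leaves the other entries unchanged. -/
noncomputable def Tro (r m : ℤ) (D : ℤ → ℤ → ℝ) : ℤ → ℤ → ℝ :=
  fun i => if i = m then odot r (D (m + 1)) (D m)
    else if i = m + 1 then otimes r (D m) (D (m + 1))
    else D i

/-- The operator `𝒮_r` for an `n`-tuple: `𝒮_r = 𝒯_{r,r}𝒯_{r,r+1}⋯𝒯_{r,n−1}`,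
the rightmost operator `𝒯_{r,n−1}` applied first. -/
noncomputable def Sop (n r : ℕ) (D : ℤ → ℤ → ℝ) : ℤ → ℤ → ℝ :=
  ((List.range (n - r)).map (fun j => ((n - 1 - j : ℕ) : ℤ))).foldl
    (fun E m => Tro (r : ℤ) m E) D

/-- The operator `𝒲 = 𝒮_{n−1}𝒮_{n−2}⋯𝒮_1` (rightmost applied first). -/
noncomputable def Wop (n : ℕ) (D : ℤ → ℤ → ℝ) : ℤ → ℤ → ℝ :=
  ((List.range (n - 1)).map (fun j => j + 1)).foldl (fun E r => Sop n r E) D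

/-- The matrix `H_r(E)`: `H_r(E)(i,j) = 1` if `i = j < r`; `e_i e_{i+1} ⋯ e_j` if
`r ≤ i ≤ j` where `e_x = E(x)/E(x−1)` (convention `E(r−1) = 1`); and `0` otherwise. -/
noncomputable def Hmat (r : ℤ) (E : ℤ → ℝ) : ℤ → ℤ → ℝ :=
  fun i j =>
    if i = j ∧ j < r then 1
    else if r ≤ i ∧ i ≤ j then ∏ x ∈ Finset.Icc i j, E x / clo r E (x - 1)
    else 0

/-- Entrywise matrix product; each sum has finitely many non-zero terms for the
matrices considered here. -/
noncomputable def matMul (A B : ℤ → ℤ → ℝ) : ℤ → ℤ → ℝ :=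
  fun i j => ∑' k : ℤ, A i k * B k j

/-- Product of a list of matrices (leftmost factor first). -/
noncomputable def matProd : List (ℤ → ℤ → ℝ) → ℤ → ℤ → ℝ
  | [] => fun i j => if i = j then 1 else 0
  | A :: L => matMul A (matProd L)

/-!
Every `H_r(E)` is upper triangular, so all products are finite sums and associative. The heart
of the matter is the two-factor identity `H_r(g) H_r(f) = H_{r+1}(f ⊗ g) H_r(g ⊙ f)`: writing
`Σ = pitSum r f g`, entry `(i, j)` of the left side is `f(j) (Σ(j) - Σ(i-1)) / g(i-1)`, and for
`r < i` the right side telescopes to the same value because `g(k) / f(k-1) = Σ(k) - Σ(k-1)` makes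
its `k`-th summand proportional to `1/Σ(k-1) - 1/Σ(k)`.

The operator `𝒯_{r,m}` replaces the adjacent factors `H_r(D_{m+1}) H_r(D_m)` by the right side of
this identity, so it leaves the product unchanged and raises the base of the factor at `m + 1` from
`r` to `r + 1`. Thus the sweep `𝒮_r` turns the bases `min(i, r)` into `min(i, r + 1)`, and after
`𝒮_1, …, 𝒮_{n-1}` the factor at `i` has base `i`. Positivity, needed to divide by `Σ`, is carried
along.
-/

open Finset Matrix

section UpperTriangular

variable {A B C : ℤ → ℤ → ℝ}

lemma matMul_eq_sum_Icc (hA : BlockTriangular A id) (hB : BlockTriangular B id) (i j : ℤ) :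
    matMul A B i j = ∑ k ∈ Icc i j, A i k * B k j := by
  refine tsum_eq_sum fun k hk => ?_
  rcases lt_or_ge k i with hki | hik
  · rw [hA hki, zero_mul]
  · rw [hB (show j < k by simp_all), mul_zero]

lemma blockTriangular_matMul (hA : BlockTriangular A id) (hB : BlockTriangular B id) :
    BlockTriangular (matMul A B) id := fun i j (hji : j < i) => by
  rw [matMul_eq_sum_Icc hA hB, Icc_eq_empty_of_lt hji, sum_empty]

lemma matMul_assoc (hA : BlockTriangular A id) (hB : BlockTriangular B id)
    (hC : BlockTriangular C id) : matMul (matMul A B) C = matMul A (matMul B C) := by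
  ext i j
  simp only [matMul_eq_sum_Icc (blockTriangular_matMul hA hB) hC,
    matMul_eq_sum_Icc hA (blockTriangular_matMul hB hC), matMul_eq_sum_Icc hA hB,
    matMul_eq_sum_Icc hB hC, sum_mul, mul_sum, mul_assoc]
  exact sum_comm' fun l k => by simp only [mem_Icc]; omega

end UpperTriangular

noncomputable def matProdDown (X : ℤ → ℤ → ℤ → ℝ) : ℕ → ℤ → ℤ → ℝ
  | 0 => matProd []
  | k + 1 => matMul (X (k + 1)) (matProdDown X k)

lemma matProd_map_range (X : ℤ → ℤ → ℤ → ℝ) (n : ℕ) :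
    matProd ((List.range n).map (fun a => X ((n : ℤ) - a))) = matProdDown X n := by
  rw [List.bind_eq_flatMap, show (List.range n).flatMap (fun a : ℕ => (pure (a : ℤ) : List ℤ))
    = (List.range n).map Nat.cast from List.flatMap_pure_eq_map _ _, List.map_map]
  induction n with
  | zero => rfl
  | succ n ih =>
    rw [List.range_succ_eq_map, List.map_cons, List.map_map]
    simp only [Function.comp_def, Nat.cast_succ, Nat.cast_zero, sub_zero, add_sub_add_right_eq_sub]
    exact congrArg (matMul _) ih

section MatProdDown

variable {X Y : ℤ → ℤ → ℤ → ℝ}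

lemma blockTriangular_matProdDown (hX : ∀ i, BlockTriangular (X i) id) (k : ℕ) :
    BlockTriangular (matProdDown X k) id := by
  induction k with
  | zero => exact fun i j (hji : j < i) => if_neg hji.ne'
  | succ k ih => exact blockTriangular_matMul (hX _) ih

lemma matProdDown_congr {k : ℕ} (h : ∀ i : ℤ, 1 ≤ i → i ≤ k → X i = Y i) :
    matProdDown X k = matProdDown Y k := by
  induction k with
  | zero => rfl
  | succ k ih =>
    simp only [matProdDown]
    rw [h (k + 1) (by omega) (by omega), ih fun i hi hik => h i hi (by omega)]

lemma matProdDown_eq_of_adjacent (hX : ∀ i, BlockTriangular (X i) id)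
    (hY : ∀ i, BlockTriangular (Y i) id) {m n : ℕ} (hm : 1 ≤ m) (hmn : m + 1 ≤ n)
    (hXY : ∀ i : ℤ, i ≠ m → i ≠ m + 1 → X i = Y i)
    (hpair : matMul (X (m + 1)) (X m) = matMul (Y (m + 1)) (Y m)) :
    matProdDown X n = matProdDown Y n := by
  induction n, hmn using Nat.le_induction with
  | base =>
    obtain ⟨k, rfl⟩ : ∃ k, m = k + 1 := ⟨m - 1, by omega⟩
    have below : matProdDown X k = matProdDown Y k :=
      matProdDown_congr fun i _ hik => hXY i (by omega) (by omega)
    simp only [matProdDown]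
    rw [← matMul_assoc (hX _) (hX _) (blockTriangular_matProdDown hX k),
      ← matMul_assoc (hY _) (hY _) (blockTriangular_matProdDown hY k)]
    push_cast at hpair ⊢
    rw [hpair, below]
  | succ n hn ih =>
    simp only [matProdDown]
    rw [ih, hXY _ (by omega) (by omega)]

end MatProdDown

section Telescoping

variable {i j : ℤ}

lemma sum_Icc_sub_telescope {G : Type*} [AddCommGroup G] (φ : ℤ → G) (hij : i ≤ j + 1) :
    ∑ k ∈ Icc i j, (φ (k - 1) - φ k) = φ (i - 1) - φ j := by
  induction j, (show i - 1 ≤ j by omega) using Int.leInduction with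
  | base => simp
  | succ j hj ih =>
    rw [← insert_Icc_right_eq_Icc_add_one (by omega), sum_insert (by simp), ih (by omega),
      add_sub_cancel_right]
    abel

lemma prod_Icc_div_telescope {G₀ : Type*} [CommGroupWithZero G₀] {φ : ℤ → G₀}
    (hφ : ∀ x, φ x ≠ 0) (hij : i ≤ j + 1) :
    ∏ k ∈ Icc i j, φ k / φ (k - 1) = φ j / φ (i - 1) := by
  induction j, (show i - 1 ≤ j by omega) using Int.leInduction with
  | base => simp [div_self (hφ _)]
  | succ j hj ih =>
    rw [← insert_Icc_right_eq_Icc_add_one (by omega), prod_insert (by simp), ih (by omega),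
      add_sub_cancel_right, div_mul_div_cancel₀ (hφ j)]

end Telescoping

section Conventions

variable {r x : ℤ} {f g : ℤ → ℝ}

lemma clo_of_lt (h : x < r) : clo r f x = 1 := if_pos h

lemma clo_of_le (h : r ≤ x) : clo r f x = f x := if_neg h.not_gt

lemma clo_ne_zero (hf : ∀ x, r ≤ x → f x ≠ 0) (x : ℤ) : clo r f x ≠ 0 := by
  unfold clo; split_ifs with h
  exacts [one_ne_zero, hf x (not_lt.mp h)]

lemma pitSum_of_lt (h : x < r) : pitSum r f g x = 0 := by
  rw [pitSum, Icc_eq_empty_of_lt h, sum_empty]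

lemma pitSum_pos (hf : ∀ x, r ≤ x → 0 < f x) (hg : ∀ x, r ≤ x → 0 < g x) (h : r ≤ x) :
    0 < pitSum r f g x := by
  refine sum_pos (fun m hm => div_pos (hg m (mem_Icc.mp hm).1) ?_) ⟨x, mem_Icc.mpr ⟨h, le_rfl⟩⟩
  unfold clo; split_ifs with h'
  exacts [one_pos, hf _ (not_lt.mp h')]

lemma pitSum_sub_pitSum {i j : ℤ} (hri : r ≤ i) (hij : i ≤ j + 1) :
    pitSum r f g j - pitSum r f g (i - 1) = ∑ k ∈ Icc i j, g k / clo r f (k - 1) := by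
  have hsplit : Icc r j = Icc r (i - 1) ∪ Icc i j := by ext; simp only [mem_union, mem_Icc]; omega
  rw [pitSum, pitSum, hsplit,
    sum_union (disjoint_left.mpr fun k hk hk' => by simp only [mem_Icc] at hk hk'; omega),
    add_sub_cancel_left]

lemma pitSum_sub_pitSum_sub_one (h : r ≤ x) :
    pitSum r f g x - pitSum r f g (x - 1) = g x / clo r f (x - 1) := by
  rw [pitSum_sub_pitSum h (by omega), Icc_self, sum_singleton]

lemma odot_pos (hf : ∀ x, r ≤ x → 0 < f x) (hg : ∀ x, r ≤ x → 0 < g x) (h : r ≤ x) :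
    0 < odot r g f x :=
  mul_pos (hf x h) (pitSum_pos hf hg h)

lemma otimes_pos (hf : ∀ x, r ≤ x → 0 < f x) (hg : ∀ x, r ≤ x → 0 < g x) (h : r ≤ x) :
    0 < otimes r f g x :=
  mul_pos (hg x h) (inv_pos.mpr (pitSum_pos hf hg h))

lemma clo_otimes_mul_pitSum (hS : pitSum r f g x ≠ 0) (h : r ≤ x) :
    clo (r + 1) (otimes r f g) x * pitSum r f g x = clo r g x := by
  rcases h.eq_or_lt with rfl | h
  · rw [clo_of_lt (lt_add_one r), one_mul, clo_of_le le_rfl, pitSum, Icc_self, sum_singleton,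
      clo_of_lt (sub_one_lt r), div_one]
  · rw [clo_of_le (by omega), clo_of_le h.le, otimes, inv_mul_cancel_right₀ hS]

end Conventions

section Hmat

variable {r i j : ℤ} {E f g : ℤ → ℝ}

lemma Hmat_of_lt (h : j < i) : Hmat r E i j = 0 := by
  rw [Hmat, if_neg (by omega), if_neg (by omega)]

lemma blockTriangular_Hmat (r : ℤ) (E : ℤ → ℝ) : BlockTriangular (Hmat r E) id :=
  fun _ _ h => Hmat_of_lt h

lemma Hmat_of_lt_base (h : i < r) : Hmat r E i j = if i = j then 1 else 0 := by
  by_cases hij : i = j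
  · subst hij; rw [Hmat, if_pos ⟨rfl, h⟩, if_pos rfl]
  · rw [Hmat, if_neg (by tauto), if_neg (by omega), if_neg hij]

lemma Hmat_of_le (hE : ∀ x, r ≤ x → E x ≠ 0) (hri : r ≤ i) (hij : i ≤ j) :
    Hmat r E i j = E j / clo r E (i - 1) := by
  rw [Hmat, if_neg (by omega), if_pos ⟨hri, hij⟩, ← clo_of_le (f := E) (hri.trans hij),
    ← prod_Icc_div_telescope (clo_ne_zero hE) (by omega)]
  exact prod_congr rfl fun x hx => by rw [clo_of_le (hri.trans (mem_Icc.mp hx).1)]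

lemma matMul_Hmat_of_lt_base (h : i < r) (B : ℤ → ℤ → ℝ) : matMul (Hmat r E) B i j = B i j := by
  rw [matMul, tsum_eq_single i fun k hk => by rw [Hmat_of_lt_base h, if_neg hk.symm, zero_mul],
    Hmat_of_lt_base h, if_pos rfl, one_mul]

lemma matMul_Hmat_Hmat_apply (hf : ∀ x, r ≤ x → f x ≠ 0) (hg : ∀ x, r ≤ x → g x ≠ 0)
    (hri : r ≤ i) (hij : i ≤ j) :
    matMul (Hmat r g) (Hmat r f) i j
      = f j / clo r g (i - 1) * (pitSum r f g j - pitSum r f g (i - 1)) := by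
  rw [matMul_eq_sum_Icc (blockTriangular_Hmat _ _) (blockTriangular_Hmat _ _),
    pitSum_sub_pitSum hri (by omega), mul_sum]
  refine sum_congr rfl fun k hk => ?_
  rw [mem_Icc] at hk
  rw [Hmat_of_le hg hri hk.1, Hmat_of_le hf (hri.trans hk.1) hk.2]
  ring

lemma matMul_Hmat_otimes_Hmat_odot_apply (hf : ∀ x, r ≤ x → 0 < f x)
    (hg : ∀ x, r ≤ x → 0 < g x) (hri : r < i) (hij : i ≤ j) :
    matMul (Hmat (r + 1) (otimes r f g)) (Hmat r (odot r g f)) i j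
      = f j / clo r g (i - 1) * (pitSum r f g j - pitSum r f g (i - 1)) := by
  have hS : ∀ x, r ≤ x → 0 < pitSum r f g x := fun x hx => pitSum_pos hf hg hx
  have hterm : ∀ k ∈ Icc i j, Hmat (r + 1) (otimes r f g) i k * Hmat r (odot r g f) k j
      = odot r g f j / clo (r + 1) (otimes r f g) (i - 1)
        * ((pitSum r f g (k - 1))⁻¹ - (pitSum r f g k)⁻¹) := by
    intro k hk
    rw [mem_Icc] at hk
    have hgk : g k = f (k - 1) * (pitSum r f g k - pitSum r f g (k - 1)) := by
      rw [pitSum_sub_pitSum_sub_one (by omega), clo_of_le (by omega)]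
      field_simp [(hf (k - 1) (by omega)).ne']
    have hodot : odot r g f (k - 1) = f (k - 1) * pitSum r f g (k - 1) := rfl
    have hotimes : otimes r f g k = g k * (pitSum r f g k)⁻¹ := rfl
    rw [Hmat_of_le (fun x hx => (otimes_pos hf hg (by omega)).ne') (by omega) hk.1,
      Hmat_of_le (fun x hx => (odot_pos hf hg hx).ne') (by omega) hk.2,
      clo_of_le (show r ≤ k - 1 by omega), hodot, hotimes, hgk]
    have hSk := hS k (by omega)
    have hSk' := hS (k - 1) (by omega)
    have hfk := hf (k - 1) (by omega)
    field_simp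
  rw [matMul_eq_sum_Icc (blockTriangular_Hmat _ _) (blockTriangular_Hmat _ _), sum_congr rfl hterm,
    ← mul_sum, sum_Icc_sub_telescope (fun x => (pitSum r f g x)⁻¹) (by omega),
    ← clo_otimes_mul_pitSum (hS _ (by omega)).ne' (show r ≤ i - 1 by omega), odot]
  have hSj := hS j (by omega)
  have hSi := hS (i - 1) (by omega)
  have hclo := clo_ne_zero (fun x hx => (otimes_pos hf hg (show r ≤ x by omega)).ne') (i - 1)
  field_simp

theorem Hmat_mul_Hmat (hf : ∀ x, r ≤ x → 0 < f x) (hg : ∀ x, r ≤ x → 0 < g x) :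
    matMul (Hmat r g) (Hmat r f)
      = matMul (Hmat (r + 1) (otimes r f g)) (Hmat r (odot r g f)) := by
  have hf₀ : ∀ x, r ≤ x → f x ≠ 0 := fun x hx => (hf x hx).ne'
  have hg₀ : ∀ x, r ≤ x → g x ≠ 0 := fun x hx => (hg x hx).ne'
  ext i j
  rcases lt_or_ge j i with hji | hij
  · rw [blockTriangular_matMul (blockTriangular_Hmat _ _) (blockTriangular_Hmat _ _) hji,
      blockTriangular_matMul (blockTriangular_Hmat _ _) (blockTriangular_Hmat _ _) hji]
  rcases lt_trichotomy i r with hir | rfl | hri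
  · rw [matMul_Hmat_of_lt_base hir, matMul_Hmat_of_lt_base (by omega), Hmat_of_lt_base hir,
      Hmat_of_lt_base hir]
  · rw [matMul_Hmat_of_lt_base (lt_add_one i), matMul_Hmat_Hmat_apply hf₀ hg₀ le_rfl hij,
      Hmat_of_le (fun x hx => (odot_pos hf hg hx).ne') le_rfl hij, clo_of_lt (sub_one_lt i),
      clo_of_lt (sub_one_lt i), pitSum_of_lt (sub_one_lt i), odot]
    ring
  · rw [matMul_Hmat_Hmat_apply hf₀ hg₀ hri.le hij, matMul_Hmat_otimes_Hmat_odot_apply hf hg hri hij]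

end Hmat

structure IsHFactorization (n : ℕ) (β : ℤ → ℤ) (E : ℤ → ℤ → ℝ) (P : ℤ → ℤ → ℝ) : Prop where
  pos : ∀ i : ℤ, 1 ≤ i → i ≤ n → ∀ x, β i ≤ x → 0 < E i x
  prod_eq : matProdDown (fun i => Hmat (β i) (E i)) n = P

/-- The base of the factor at `i` during the sweep `𝒮_r`, once the operators `𝒯_{r,m}` with
`m ≥ c` have been applied. -/
def sweepBase (r c i : ℤ) : ℤ := if i ≤ c then min i r else r + 1

lemma foldl_map_range_succ {α γ : Type*} (f : γ → α → γ) (φ : ℕ → α) (b : γ) (k : ℕ) :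
    ((List.range (k + 1)).map φ).foldl f b = f (((List.range k).map φ).foldl f b) (φ k) := by
  rw [List.range_succ, List.map_append, List.foldl_append]
  rfl

namespace IsHFactorization

variable {n : ℕ} {β β' : ℤ → ℤ} {E : ℤ → ℤ → ℝ} {P : ℤ → ℤ → ℝ}

lemma congr_base (h : IsHFactorization n β E P) (hβ : ∀ i : ℤ, 1 ≤ i → i ≤ n → β i = β' i) :
    IsHFactorization n β' E P where
  pos i hi hin x hx := h.pos i hi hin x (by rwa [hβ i hi hin])
  prod_eq := by
    rw [← h.prod_eq]
    exact matProdDown_congr fun i hi hin => by rw [hβ i hi (by omega)]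

lemma tro {m : ℕ} {r : ℤ} (hr : 1 ≤ r) (hrm : r ≤ m) (hmn : m + 1 ≤ n)
    (h : IsHFactorization n (sweepBase r (m + 1)) E P) :
    IsHFactorization n (sweepBase r m) (Tro r m E) P := by
  obtain ⟨hb_self, hb_succ, hb_self', hb_succ'⟩ :
      sweepBase r m m = r ∧ sweepBase r m (m + 1) = r + 1
        ∧ sweepBase r (m + 1) m = r ∧ sweepBase r (m + 1) (m + 1) = r := by
    refine ⟨?_, ?_, ?_, ?_⟩ <;> simp only [sweepBase] <;> split_ifs <;> omega
  have hf : ∀ x, r ≤ x → 0 < E m x := fun x hx =>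
    h.pos m (by omega) (by omega) x (by rwa [hb_self'])
  have hg : ∀ x, r ≤ x → 0 < E (m + 1) x := fun x hx =>
    h.pos (m + 1) (by omega) (by omega) x (by rwa [hb_succ'])
  have hTro_self : Tro r m E m = odot r (E (m + 1)) (E m) := if_pos rfl
  have hTro_succ : Tro r m E (m + 1) = otimes r (E m) (E (m + 1)) := by simp [Tro]
  have hTro_of_ne : ∀ i : ℤ, i ≠ m → i ≠ m + 1 → Tro r m E i = E i := fun i h₁ h₂ => by
    simp only [Tro, if_neg h₁, if_neg h₂]
  have hbase : ∀ i : ℤ, i ≠ m + 1 → sweepBase r m i = sweepBase r (m + 1) i := fun i hi => by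
    simp only [sweepBase]; split_ifs <;> omega
  refine ⟨fun i hi hin x hx => ?_, ?_⟩
  · by_cases him : i = m
    · subst him
      rw [hTro_self]
      exact odot_pos hf hg (hb_self ▸ hx)
    by_cases him' : i = m + 1
    · subst him'
      rw [hTro_succ]
      exact otimes_pos hf hg (by omega)
    rw [hTro_of_ne i him him']
    exact h.pos i hi hin x (by rwa [← hbase i him'])
  · rw [← h.prod_eq]
    refine matProdDown_eq_of_adjacent (fun _ => blockTriangular_Hmat _ _)
      (fun _ => blockTriangular_Hmat _ _) (by omega) hmn
      (fun i h₁ h₂ => by rw [hTro_of_ne i h₁ h₂, hbase i h₂]) ?_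
    rw [hTro_self, hTro_succ, hb_self, hb_succ, hb_self', hb_succ', Hmat_mul_Hmat hf hg]

lemma sop {r : ℕ} (hr : 1 ≤ r) (hrn : r ≤ n) (h : IsHFactorization n (sweepBase r n) E P) :
    IsHFactorization n (sweepBase r r) (Sop n r E) P := by
  have key : ∀ k ≤ n - r, IsHFactorization n (sweepBase r (n - k))
      (((List.range k).map fun j => ((n - 1 - j : ℕ) : ℤ)).foldl (fun E m => Tro r m E) E)
      P := by
    intro k hk
    induction k with
    | zero => simpa using h
    | succ k ih =>
      have ih := ih (by omega)
      rw [show (n : ℤ) - k = ((n - 1 - k : ℕ) : ℤ) + 1 by omega] at ih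
      rw [foldl_map_range_succ, show (n : ℤ) - (k + 1 : ℕ) = ((n - 1 - k : ℕ) : ℤ) by omega]
      exact ih.tro (by omega) (by omega) (by omega)
  have := key (n - r) le_rfl
  rwa [show (n : ℤ) - (n - r : ℕ) = r by omega] at this

lemma wop {D : ℤ → ℤ → ℝ} (h : IsHFactorization n (fun _ => 1) D P) :
    IsHFactorization n (fun i => i) (Wop n D) P := by
  have key : ∀ t ≤ n - 1, IsHFactorization n (sweepBase (t + 1) n)
      (((List.range t).map fun j => j + 1).foldl (fun E r => Sop n r E) D) P := by
    intro t ht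
    induction t with
    | zero => exact h.congr_base fun i hi hin => by simp only [sweepBase, if_pos hin]; omega
    | succ t ih =>
      rw [foldl_map_range_succ]
      refine ((ih (by omega)).sop (r := t + 1) (by omega) (by omega)).congr_base
        fun i hi hin => ?_
      simp only [sweepBase, if_pos hin]
      split_ifs <;> omega
  exact (key (n - 1) le_rfl).congr_base fun i hi hin => by simp only [sweepBase, if_pos hin]; omega

end IsHFactorization

theorem full_H_matrix_identity_general (n : ℕ) (D : ℤ → ℤ → ℝ)
    (hD : ∀ i : ℤ, 1 ≤ i → i ≤ (n : ℤ) → ∀ x : ℤ, 1 ≤ x → 0 < D i x) :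
    ∀ i j : ℤ, 1 ≤ i → 1 ≤ j →
      matProd ((List.range n).map (fun a => Hmat 1 (D ((n : ℤ) - a)))) i j
        = matProd ((List.range n).map
            (fun a => Hmat ((n : ℤ) - a) (Wop n D ((n : ℤ) - a)))) i j := by
  intro i j _ _
  have h : IsHFactorization n (fun i => i) (Wop n D) (matProdDown (fun i => Hmat 1 (D i)) n) :=
    IsHFactorization.wop ⟨hD, rfl⟩
  rw [matProd_map_range (fun z => Hmat 1 (D z)), matProd_map_range (fun z => Hmat z (Wop n D z)),
    ← h.prod_eq]

/-- **The matrix identity (2.25):** with `D̃ = 𝒲D`,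
`H_1(D_n)⋯H_1(D_1) = H_n(D̃_n)⋯H_1(D̃_1)` entrywise. -/
theorem full_H_matrix_identity (n : ℕ) (hn : 2 ≤ n) (D : ℤ → ℤ → ℝ)
    (hD : ∀ i : ℤ, 1 ≤ i → i ≤ (n : ℤ) → ∀ x : ℤ, 1 ≤ x → 0 < D i x) :
    ∀ i j : ℤ, 1 ≤ i → 1 ≤ j →
      matProd ((List.range n).map (fun a => Hmat 1 (D ((n : ℤ) - a)))) i j
        = matProd ((List.range n).map
            (fun a => Hmat ((n : ℤ) - a) (Wop n D ((n : ℤ) - a)))) i j :=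
  full_H_matrix_identity_general n D hD
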